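/- arXiv:1610.08411 — 2 statements merged into one kernel-verified Lean document; each statement's English description precedes it below -/
import Mathlib

section
/- If W is a set of k workers (k odd), each with accuracy strictly greater than 1/2, and w is a new worker with accuracy α_w > 1/2, then Pr(W ∪ {w}) ≥ Pr(W), where Pr(W ∪ {w}) is the majority accuracy over W ∪ {w} with threshold ⌈(k+1)/2⌉ and Pr(W) is the majority accuracy over W with threshold ⌈k/2⌉; i.e., the expected accuracy of the task does not decrease when assigning an additional worker with accuracy above 1/2. -/
/-- Majority-voting accuracy of the worker set `V`: probability that at least `⌈|V|/2⌉`
of the independent workers in `V` answer correctly. -/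
noncomputable def maj {ι : Type*} [DecidableEq ι] (V : Finset ι) (α : ι → ℝ) : ℝ :=
  ∑ S ∈ V.powerset.filter (fun S => (V.card + 1) / 2 ≤ S.card),
    (∏ j ∈ S, α j) * ∏ j ∈ V \ S, (1 - α j)

/-- Adding a new worker with accuracy strictly greater than `1/2` to an odd-sized set of
workers, all of whose accuracies exceed `1/2`, does not decrease the expected (majority)
accuracy of the task: `Pr(W ∪ {w}) ≥ Pr(W)`. -/
theorem majority_add_worker {ι : Type*} [DecidableEq ι] (W : Finset ι) (α : ι → ℝ)
    (w : ι) (hw : w ∉ W) (hodd : Odd W.card)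
    (hα : ∀ j ∈ W, 1 / 2 < α j ∧ α j ≤ 1) (hαw : 1 / 2 < α w) (hαw1 : α w ≤ 1) :
    maj W α ≤ maj (insert w W) α := by
  obtain ⟨m, hm⟩ := hodd
  have hcard : (insert w W).card = W.card + 1 := Finset.card_insert_of_notMem hw
  set f : Finset ι → ℝ := fun S => (∏ j ∈ S, α j) * ∏ j ∈ W \ S, (1 - α j) with hf
  have hfnn : ∀ S, S ⊆ W → 0 ≤ f S := by
    intro S hS
    apply mul_nonneg
    · exact Finset.prod_nonneg fun j hj => le_of_lt (lt_trans (by norm_num) (hα j (hS hj)).1)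
    · exact Finset.prod_nonneg fun j hj => by
        have := (hα j (Finset.mem_sdiff.mp hj).1).2; linarith
  have hL : maj W α = ∑ S ∈ W.powerset,
      (if m + 1 ≤ S.card then f S else 0) := by
    rw [maj, Finset.sum_filter]
    apply Finset.sum_congr rfl
    intro S _
    have : (W.card + 1) / 2 = m + 1 := by omega
    rw [this]
  have hR : maj (insert w W) α = ∑ S ∈ W.powerset,
      ((if m + 1 ≤ S.card then (1 - α w) * f S else 0)
        + (if m + 1 ≤ S.card + 1 then α w * f S else 0)) := by
    rw [maj, Finset.sum_filter, Finset.sum_powerset_insert hw, Finset.sum_add_distrib]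
    congr 1
    · apply Finset.sum_congr rfl
      intro S hS
      rw [Finset.mem_powerset] at hS
      have hwS : w ∉ S := fun h => hw (hS h)
      have hthr : ((insert w W).card + 1) / 2 = m + 1 := by rw [hcard]; omega
      have hsd : (insert w W) \ S = insert w (W \ S) := by
        ext x
        simp only [Finset.mem_sdiff, Finset.mem_insert]
        constructor
        · rintro ⟨h1 | h1, h2⟩
          · exact Or.inl h1
          · exact Or.inr ⟨h1, h2⟩
        · rintro (h1 | ⟨h1, h2⟩)
          · exact ⟨Or.inl h1, h1 ▸ hwS⟩
          · exact ⟨Or.inr h1, h2⟩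
      rw [hthr, hsd, Finset.prod_insert (by simp [hw])]
      split_ifs <;> ring
    · apply Finset.sum_congr rfl
      intro S hS
      rw [Finset.mem_powerset] at hS
      have hwS : w ∉ S := fun h => hw (hS h)
      have hthr : ((insert w W).card + 1) / 2 = m + 1 := by rw [hcard]; omega
      have hcS : (insert w S).card = S.card + 1 := Finset.card_insert_of_notMem hwS
      have hsd : (insert w W) \ (insert w S) = W \ S := by
        ext x
        simp only [Finset.mem_sdiff, Finset.mem_insert, not_or]
        constructor
        · rintro ⟨h1 | h1, h2, h3⟩
          · exact absurd h1 h2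
          · exact ⟨h1, h3⟩
        · rintro ⟨h1, h2⟩
          exact ⟨Or.inr h1, fun h => hw (h ▸ h1), h2⟩
      rw [hthr, hcS, hsd, Finset.prod_insert hwS]
      split_ifs <;> ring
  rw [hL, hR]
  apply Finset.sum_le_sum
  intro S hS
  rw [Finset.mem_powerset] at hS
  have h0 := hfnn S hS
  split_ifs with h1 h2 h2 <;> [nlinarith; omega; nlinarith; norm_num]
end

section
/- The greedy algorithm that repeatedly adds the available worker with the highest accuracy to the assigned set until the majority-voting accuracy reaches the quality threshold q returns a worker set of minimum cardinality among all subsets of available workers achieving accuracy at least q (if such a set exists). Formally: if the greedy-selected set W_o satisfies Pr(W_o) ≥ q and every proper-size subset W' ⊆ W with |W'| = |W_o| − 1 consists of workers whose accuracies are each at most the corresponding greedily chosen accuracies, then Pr(W') < q. -/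
lemma maj_congr {ι : Type*} [DecidableEq ι] (V : Finset ι) (α β : ι → ℝ)
    (h : ∀ k ∈ V, α k = β k) : maj V α = maj V β := by
  unfold maj
  refine Finset.sum_congr rfl fun S hS => ?_
  have hSV : S ⊆ V := Finset.mem_powerset.mp (Finset.mem_filter.mp hS).1
  congr 1
  · exact Finset.prod_congr rfl fun k hk => h k (hSV hk)
  · exact Finset.prod_congr rfl fun k hk => by rw [h k (Finset.mem_sdiff.mp hk).1]

lemma maj_update_mono {ι : Type*} [DecidableEq ι] (V : Finset ι) (j : ι) (hj : j ∈ V)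
    (α : ι → ℝ) (hbd : ∀ k ∈ V, k ≠ j → 0 ≤ α k ∧ α k ≤ 1) {a b : ℝ} (hab : a ≤ b) :
    maj V (Function.update α j a) ≤ maj V (Function.update α j b) := by
  classical
  set P := V.powerset.filter (fun S => (V.card + 1) / 2 ≤ S.card) with hP
  set A := ∑ S ∈ P.filter (fun S => j ∈ S),
      (∏ k ∈ S.erase j, α k) * ∏ k ∈ V \ S, (1 - α k) with hA
  set B := ∑ S ∈ P.filter (fun S => j ∉ S),
      (∏ k ∈ S, α k) * ∏ k ∈ (V \ S).erase j, (1 - α k) with hB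
  have key : ∀ x : ℝ, maj V (Function.update α j x) = x * A + (1 - x) * B := by
    intro x
    unfold maj
    rw [← hP, ← Finset.sum_filter_add_sum_filter_not P (fun S => j ∈ S)]
    rw [hA, hB, Finset.mul_sum, Finset.mul_sum]
    congr 1
    · refine Finset.sum_congr rfl fun S hS => ?_
      have hjS : j ∈ S := (Finset.mem_filter.mp hS).2
      have hSV : S ⊆ V := Finset.mem_powerset.mp
        (Finset.mem_filter.mp (Finset.mem_filter.mp hS).1).1
      rw [← Finset.mul_prod_erase S _ hjS, Function.update_self]
      have h2 : ∏ k ∈ S.erase j, Function.update α j x k = ∏ k ∈ S.erase j, α k :=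
        Finset.prod_congr rfl fun k hk => Function.update_of_ne (Finset.ne_of_mem_erase hk) _ _
      have h3 : ∏ k ∈ V \ S, (1 - Function.update α j x k) = ∏ k ∈ V \ S, (1 - α k) :=
        Finset.prod_congr rfl fun k hk => by
          rw [Function.update_of_ne (fun h => (Finset.mem_sdiff.mp hk).2 (by rw [h]; exact hjS)) _ _]
      rw [h2, h3]; ring
    · refine Finset.sum_congr rfl fun S hS => ?_
      have hjS : j ∉ S := (Finset.mem_filter.mp hS).2
      have hSV : S ⊆ V := Finset.mem_powerset.mp
        (Finset.mem_filter.mp (Finset.mem_filter.mp hS).1).1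
      have hjVS : j ∈ V \ S := Finset.mem_sdiff.mpr ⟨hj, hjS⟩
      rw [← Finset.mul_prod_erase (V \ S) _ hjVS, Function.update_self]
      have h2 : ∏ k ∈ S, Function.update α j x k = ∏ k ∈ S, α k :=
        Finset.prod_congr rfl fun k hk => Function.update_of_ne (fun h => hjS (by rw [← h]; exact hk)) _ _
      have h3 : ∏ k ∈ (V \ S).erase j, (1 - Function.update α j x k) =
          ∏ k ∈ (V \ S).erase j, (1 - α k) :=
        Finset.prod_congr rfl fun k hk => by
          rw [Function.update_of_ne (Finset.ne_of_mem_erase hk) _ _]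
      rw [h2, h3]; ring
  have cnonneg : ∀ S ∈ P.filter (fun S => j ∈ S),
      0 ≤ (∏ k ∈ S.erase j, α k) * ∏ k ∈ V \ S, (1 - α k) := by
    intro S hS
    have hjS : j ∈ S := (Finset.mem_filter.mp hS).2
    have hSV : S ⊆ V := Finset.mem_powerset.mp
      (Finset.mem_filter.mp (Finset.mem_filter.mp hS).1).1
    apply mul_nonneg
    · exact Finset.prod_nonneg fun k hk =>
        (hbd k (hSV (Finset.mem_of_mem_erase hk)) (Finset.ne_of_mem_erase hk)).1
    · exact Finset.prod_nonneg fun k hk => by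
        have hk' := Finset.mem_sdiff.mp hk
        have := (hbd k hk'.1 (fun h => hk'.2 (h ▸ hjS))).2
        linarith
  have hBA : B ≤ A := by
    have hmaps : ∀ S ∈ P.filter (fun S => j ∉ S), insert j S ∈ P.filter (fun S => j ∈ S) := by
      intro S hS
      have hjS : j ∉ S := (Finset.mem_filter.mp hS).2
      have hSP := (Finset.mem_filter.mp hS).1
      have hSV : S ⊆ V := Finset.mem_powerset.mp (Finset.mem_filter.mp hSP).1
      have hw : (V.card + 1) / 2 ≤ S.card := (Finset.mem_filter.mp hSP).2
      refine Finset.mem_filter.mpr ⟨Finset.mem_filter.mpr ⟨Finset.mem_powerset.mpr ?_, ?_⟩,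
        Finset.mem_insert_self _ _⟩
      · exact Finset.insert_subset hj hSV
      · rw [Finset.card_insert_of_notMem hjS]; omega
    have hsub : (P.filter (fun S => j ∉ S)).image (insert j) ⊆ P.filter (fun S => j ∈ S) := by
      intro T hT
      obtain ⟨S, hS, rfl⟩ := Finset.mem_image.mp hT
      exact hmaps S hS
    have hinj : ∀ S ∈ P.filter (fun S => j ∉ S), ∀ T ∈ P.filter (fun S => j ∉ S),
        insert j S = insert j T → S = T := by
      intro S hS T hT h
      have hjS : j ∉ S := (Finset.mem_filter.mp hS).2
      have hjT : j ∉ T := (Finset.mem_filter.mp hT).2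
      rw [← Finset.erase_insert hjS, ← Finset.erase_insert hjT, h]
    calc B = ∑ T ∈ (P.filter (fun S => j ∉ S)).image (insert j),
            (∏ k ∈ T.erase j, α k) * ∏ k ∈ V \ T, (1 - α k) := by
          rw [Finset.sum_image hinj]
          refine Finset.sum_congr rfl fun S hS => ?_
          have hjS : j ∉ S := (Finset.mem_filter.mp hS).2
          rw [Finset.erase_insert hjS, Finset.sdiff_insert]
      _ ≤ A := Finset.sum_le_sum_of_subset_of_nonneg hsub
          (fun S hS _ => cnonneg S hS)
  rw [key a, key b]
  nlinarith [hBA, hab]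

lemma maj_mono {ι : Type*} [DecidableEq ι] (V : Finset ι) (α β : ι → ℝ)
    (h0 : ∀ k ∈ V, 0 ≤ α k) (hle : ∀ k ∈ V, α k ≤ β k) (h1 : ∀ k ∈ V, β k ≤ 1) :
    maj V α ≤ maj V β := by
  classical
  have key : ∀ T : Finset ι, T ⊆ V →
      maj V α ≤ maj V (fun x => if x ∈ T then β x else α x) := by
    intro T
    induction T using Finset.induction_on with
    | empty => intro _; simp
    | @insert j T hjT ih =>
      intro hsub
      have hjV : j ∈ V := hsub (Finset.mem_insert_self _ _)
      have hTV : T ⊆ V := fun x hx => hsub (Finset.mem_insert_of_mem hx)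
      set γ : ι → ℝ := fun x => if x ∈ T then β x else α x with hγ
      have e1 : γ = Function.update γ j (α j) := by
        funext x
        by_cases hx : x = j
        · subst hx; simp [hγ, hjT]
        · rw [Function.update_of_ne hx]
      have e2 : (fun x => if x ∈ insert j T then β x else α x) = Function.update γ j (β j) := by
        funext x
        by_cases hx : x = j
        · subst hx; simp [Function.update_self]
        · rw [Function.update_of_ne hx]
          simp [hγ, Finset.mem_insert, hx]
      have hbd : ∀ k ∈ V, k ≠ j → 0 ≤ γ k ∧ γ k ≤ 1 := by
        intro k hk _
        by_cases hkT : k ∈ T <;>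
          simp only [hγ, hkT, if_true, if_false] <;>
          constructor
        · linarith [h0 k hk, hle k hk]
        · exact h1 k hk
        · exact h0 k hk
        · linarith [hle k hk, h1 k hk]
      calc maj V α ≤ maj V γ := ih hTV
        _ = maj V (Function.update γ j (α j)) := by rw [← e1]
        _ ≤ maj V (Function.update γ j (β j)) :=
            maj_update_mono V j hjV γ hbd (hle j hjV)
        _ = _ := by rw [e2]
  have h := key V (le_refl V)
  have : maj V (fun x => if x ∈ V then β x else α x) = maj V β :=
    maj_congr _ _ _ (fun k hk => by simp [hk])
  linarith

lemma maj_image {ι : Type*} [DecidableEq ι] (V : Finset ι) (f : ι → ι)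
    (hf : Set.InjOn f (V : Set ι)) (α : ι → ℝ) :
    maj V (fun v => α (f v)) = maj (V.image f) α := by
  classical
  unfold maj
  have hcard : (V.image f).card = V.card := Finset.card_image_of_injOn hf
  refine Finset.sum_nbij' (i := fun S => S.image f)
    (j := fun S' => V.filter (fun v => f v ∈ S')) ?_ ?_ ?_ ?_ ?_
  · intro S hS
    have hSV : S ⊆ V := Finset.mem_powerset.mp (Finset.mem_filter.mp hS).1
    have hw := (Finset.mem_filter.mp hS).2
    refine Finset.mem_filter.mpr ⟨Finset.mem_powerset.mpr (Finset.image_subset_image hSV), ?_⟩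
    rw [hcard, Finset.card_image_of_injOn (hf.mono (by exact_mod_cast hSV))]
    exact hw
  · intro S' hS'
    have hS'V : S' ⊆ V.image f := Finset.mem_powerset.mp (Finset.mem_filter.mp hS').1
    have hw := (Finset.mem_filter.mp hS').2
    refine Finset.mem_filter.mpr ⟨Finset.mem_powerset.mpr (Finset.filter_subset _ _), ?_⟩
    have himg : (V.filter (fun v => f v ∈ S')).image f = S' := by
      apply Finset.Subset.antisymm
      · intro y hy
        obtain ⟨x, hx, rfl⟩ := Finset.mem_image.mp hy
        exact (Finset.mem_filter.mp hx).2
      · intro y hy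
        obtain ⟨x, hx, rfl⟩ := Finset.mem_image.mp (hS'V hy)
        exact Finset.mem_image.mpr ⟨x, Finset.mem_filter.mpr ⟨hx, hy⟩, rfl⟩
    have hc : (V.filter (fun v => f v ∈ S')).card = S'.card := by
      conv_rhs => rw [← himg]
      exact (Finset.card_image_of_injOn (hf.mono (by
        intro x hx
        exact (Finset.mem_filter.mp (by exact_mod_cast hx)).1))).symm
    simpa only [hcard, hc] using hw
  · intro S hS
    have hSV : S ⊆ V := Finset.mem_powerset.mp (Finset.mem_filter.mp hS).1
    apply Finset.Subset.antisymm
    · intro x hx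
      have hx' := Finset.mem_filter.mp hx
      obtain ⟨y, hy, hyx⟩ := Finset.mem_image.mp hx'.2
      rwa [← hf (hSV hy) hx'.1 hyx]
    · intro x hx
      exact Finset.mem_filter.mpr ⟨hSV hx, Finset.mem_image_of_mem f hx⟩
  · intro S' hS'
    have hS'V : S' ⊆ V.image f := Finset.mem_powerset.mp (Finset.mem_filter.mp hS').1
    apply Finset.Subset.antisymm
    · intro y hy
      obtain ⟨x, hx, rfl⟩ := Finset.mem_image.mp hy
      exact (Finset.mem_filter.mp hx).2
    · intro y hy
      obtain ⟨x, hx, rfl⟩ := Finset.mem_image.mp (hS'V hy)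
      exact Finset.mem_image.mpr ⟨x, Finset.mem_filter.mpr ⟨hx, hy⟩, rfl⟩
  · intro S hS
    have hSV : S ⊆ V := Finset.mem_powerset.mp (Finset.mem_filter.mp hS).1
    have hsd : (V.image f) \ (S.image f) = (V \ S).image f := by
      apply Finset.Subset.antisymm
      · intro y hy
        have hy' := Finset.mem_sdiff.mp hy
        obtain ⟨x, hx, rfl⟩ := Finset.mem_image.mp hy'.1
        refine Finset.mem_image.mpr ⟨x, Finset.mem_sdiff.mpr ⟨hx, fun hxS => ?_⟩, rfl⟩
        exact hy'.2 (Finset.mem_image_of_mem f hxS)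
      · intro y hy
        obtain ⟨x, hx, rfl⟩ := Finset.mem_image.mp hy
        have hx' := Finset.mem_sdiff.mp hx
        refine Finset.mem_sdiff.mpr ⟨Finset.mem_image_of_mem f hx'.1, fun hc => ?_⟩
        obtain ⟨z, hz, hzx⟩ := Finset.mem_image.mp hc
        exact hx'.2 (hf (hSV hz) hx'.1 hzx ▸ hz)
    rw [hsd]
    show (∏ j ∈ S, α (f j)) * ∏ j ∈ V \ S, (1 - α (f j)) = _
    congr 1
    · exact (Finset.prod_image (fun x hx y hy h => hf (hSV hx) (hSV hy) h)).symm
    · exact (Finset.prod_image (f := fun y => 1 - α y) (fun x hx y hy h =>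
        hf (Finset.mem_sdiff.mp hx).1 (Finset.mem_sdiff.mp hy).1 h)).symm

/-- Optimality of the greedy worker selection: suppose the greedy set `W_o ⊆ W`
(whose last added worker is `wj`) first reaches the quality threshold `q` at
cardinality `|W_o|`, i.e. `maj (W_o \ {wj}) < q`.  Then any subset `W' ⊆ W` with
`|W'| = |W_o| − 1` whose workers' accuracies are dominated coordinatewise (via a
bijection `f` onto `W_o \ {wj}`) by the greedily chosen accuracies satisfies
`maj W' < q`; i.e. the greedy set is of minimum cardinality. -/
theorem greedy_min_worker_set {ι : Type*} [DecidableEq ι]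
    (W Wo W' : Finset ι) (α : ι → ℝ) (q : ℝ) (wj : ι) (f : ι → ι)
    (hα : ∀ j ∈ W, 1 / 2 < α j ∧ α j ≤ 1)
    (hWo : Wo ⊆ W) (hwj : wj ∈ Wo)
    (hlast : maj (Wo.erase wj) α < q)
    (hW' : W' ⊆ W) (hcard : W'.card = Wo.card - 1)
    (hbij : Set.BijOn f (W' : Set ι) ((Wo.erase wj : Finset ι) : Set ι))
    (hdom : ∀ v ∈ W', α v ≤ α (f v)) :
    maj W' α < q := by
  have himg : W'.image f = Wo.erase wj := by
    apply Finset.coe_injective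
    rw [Finset.coe_image]
    exact hbij.image_eq
  have hfv : ∀ v ∈ W', f v ∈ W := by
    intro v hv
    have : f v ∈ (Wo.erase wj : Finset ι) := by
      have := hbij.mapsTo (by exact_mod_cast hv)
      exact_mod_cast this
    exact hWo (Finset.mem_of_mem_erase this)
  have h1 : maj W' α ≤ maj W' (fun v => α (f v)) := by
    apply maj_mono
    · intro k hk; linarith [(hα k (hW' hk)).1]
    · exact hdom
    · intro k hk; exact (hα (f k) (hfv k hk)).2
  have h2 : maj W' (fun v => α (f v)) = maj (Wo.erase wj) α := by
    rw [maj_image W' f hbij.injOn α, himg]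
  linarith
end
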